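/- arXiv:2301.04749 — 3 statements merged into one kernel-verified Lean document; each statement's English description precedes it below -/
import Mathlib

section
/- Let w be a weight on the unit disk 𝔻, and suppose there exist constants 0 < δ < 1 and m > 0 such that w(z) ≥ m whenever δ ≤ |z| < 1. Then with C_w := 1 + 4(∫_{|z|≤δ} w dσ)/(m(1-δ)²), every function f holomorphic on 𝔻 satisfies ∫_𝔻 |f|² w dσ ≤ C_w ∫_{δ<|z|<1} |f|² w dσ. -/
/-!
By the maximum modulus principle, `|f|` on the closed disc `|z| ≤ δ` is bounded by `|f z₀|` for
some `z₀` on the circle `|z| = (1 + δ) / 2`. The disc of radius `(1 - δ) / 2` about `z₀` lies in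
the annulus `δ < |z| < 1`, where `w ≥ m`, so the area sub-mean-value property of `|f|²` gives
`π ((1 - δ) / 2)² m |f z₀|² ≤ ∫_{annulus} |f|² w`. Integrating this pointwise bound against `w`
over `|z| ≤ δ` controls the inner part of the integral by the annular part.
-/

open Complex MeasureTheory Metric Set Real

theorem setIntegral_ball_eq_setIntegral_ball_zero {E F : Type*} [NormedAddCommGroup E]
    [MeasurableSpace E] [BorelSpace E] [NormedAddCommGroup F] [NormedSpace ℝ F]
    (μ : Measure E) [μ.IsAddLeftInvariant] (g : E → F) (c : E) (s : ℝ) :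
    ∫ z in ball c s, g z ∂μ = ∫ z in ball 0 s, g (c + z) ∂μ := by
  rw [← (measurePreserving_add_left μ c).setIntegral_preimage_emb
    (measurableEmbedding_addLeft c), preimage_add_ball, sub_self]

theorem Complex.polarCoord_target_inter_preimage_ball (s : ℝ) :
    Complex.polarCoord.target ∩ Complex.polarCoord.symm ⁻¹' ball 0 s = Ioo 0 s ×ˢ Ioo (-π) π := by
  ext ⟨t, θ⟩
  simp only [Complex.polarCoord_target, mem_inter_iff, mem_prod, mem_preimage,
    mem_ball_zero_iff, norm_polarCoord_symm, mem_Ioi, mem_Ioo]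
  constructor
  · rintro ⟨⟨ht, hθ⟩, hts⟩
    exact ⟨⟨ht, by rwa [abs_of_pos ht] at hts⟩, hθ⟩
  · rintro ⟨⟨ht, hts⟩, hθ⟩
    exact ⟨⟨ht, hθ⟩, by rwa [abs_of_pos ht]⟩

theorem setIntegral_ball_eq_setIntegral_polarCoord (g : ℂ → ℝ) (c : ℂ) (s : ℝ) :
    ∫ z in ball c s, g z = ∫ p in Ioo 0 s ×ˢ Ioo (-π) π, p.1 * g (circleMap c p.1 p.2) := by
  calc ∫ z in ball c s, g z
      = ∫ z, (ball 0 s).indicator (fun z => g (c + z)) z := by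
        rw [setIntegral_ball_eq_setIntegral_ball_zero, integral_indicator measurableSet_ball]
    _ = ∫ p in Complex.polarCoord.target ∩ Complex.polarCoord.symm ⁻¹' ball 0 s,
          p.1 * g (c + Complex.polarCoord.symm p) := by
        rw [← Complex.integral_comp_polarCoord_symm, ← setIntegral_indicator]
        · congr 1 with p
          by_cases hp : Complex.polarCoord.symm p ∈ ball 0 s
          · rw [indicator_of_mem hp, indicator_of_mem (mem_preimage.2 hp), smul_eq_mul]
          · rw [indicator_of_notMem hp, indicator_of_notMem (by exact hp), smul_zero]
        · exact measurableSet_ball.preimage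
            (equivRealProdCLM.symm.continuous.comp continuous_polarCoord_symm).measurable
    _ = ∫ p in Ioo 0 s ×ˢ Ioo (-π) π, p.1 * g (circleMap c p.1 p.2) := by
        rw [Complex.polarCoord_target_inter_preimage_ball]
        refine setIntegral_congr_fun (measurableSet_Ioo.prod measurableSet_Ioo) fun p _ => ?_
        simp [circleMap, Complex.polarCoord_symm_apply, Complex.exp_mul_I]

theorem integral_ball_eq_intervalIntegral_circleAverage {g : ℂ → ℝ} {c : ℂ} {s : ℝ}
    (hs : 0 ≤ s) (hg : ContinuousOn g (closedBall c s)) :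
    ∫ z in ball c s, g z = ∫ t in 0..s, 2 * π * t * circleAverage g c t := by
  set G : ℝ × ℝ → ℝ := fun p => p.1 * g (circleMap c p.1 p.2)
  have hGint : IntegrableOn G (Ioo 0 s ×ˢ Ioo (-π) π) := by
    refine (ContinuousOn.integrableOn_compact (isCompact_Icc.prod isCompact_Icc) ?_).mono_set
      (prod_mono Ioo_subset_Icc_self Ioo_subset_Icc_self)
    refine continuousOn_fst.mul (hg.comp (by fun_prop) ?_)
    rintro ⟨t, θ⟩ ⟨ht, -⟩
    exact closedBall_subset_closedBall ht.2 (circleMap_mem_closedBall c ht.1 θ)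
  have hcircle (t : ℝ) : ∫ θ in Ioo (-π) π, G (t, θ) = 2 * π * t * circleAverage g c t := by
    rw [circleAverage_eq_integral_add (-π), intervalIntegral.integral_comp_add_right
      (fun θ => g (circleMap c t θ)), zero_add, show 2 * π + -π = π by ring,
      intervalIntegral.integral_of_le (by linarith [pi_pos]), integral_Ioc_eq_integral_Ioo,
      integral_const_mul, smul_eq_mul]
    field_simp
  rw [setIntegral_ball_eq_setIntegral_polarCoord, Measure.volume_eq_prod,
    setIntegral_prod G (by rwa [← Measure.volume_eq_prod]), intervalIntegral.integral_of_le hs,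
    integral_Ioc_eq_integral_Ioo]
  simp_rw [hcircle]

theorem norm_circleAverage_le {E : Type*} [NormedAddCommGroup E] [NormedSpace ℝ E]
    (f : ℂ → E) (c : ℂ) (R : ℝ) :
    ‖circleAverage f c R‖ ≤ circleAverage (fun z => ‖f z‖) c R := by
  rw [circleAverage_def, circleAverage_def, norm_smul, smul_eq_mul,
    Real.norm_of_nonneg (by positivity)]
  gcongr
  exact intervalIntegral.norm_integral_le_integral_norm two_pi_pos.le

theorem DiffContOnCl.sq_norm_le_circleAverage {f : ℂ → ℂ} {c : ℂ} {R : ℝ}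
    (hf : DiffContOnCl ℂ f (ball c |R|)) :
    ‖f c‖ ^ 2 ≤ Real.circleAverage (fun z => ‖f z‖ ^ 2) c R := by
  have hf2 : DiffContOnCl ℂ (fun z => f z ^ 2) (ball c |R|) := ⟨hf.1.pow 2, hf.2.pow 2⟩
  have := norm_circleAverage_le (fun z => f z ^ 2) c R
  simpa only [hf2.circleAverage, norm_pow] using this

theorem DiffContOnCl.mul_sq_norm_le_integral_ball {f : ℂ → ℂ} {c : ℂ} {s : ℝ} (hs : 0 ≤ s)
    (hf : DiffContOnCl ℂ f (ball c s)) :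
    π * s ^ 2 * ‖f c‖ ^ 2 ≤ ∫ z in ball c s, ‖f z‖ ^ 2 := by
  have hcont : ContinuousOn (fun z => ‖f z‖ ^ 2) (closedBall c s) :=
    hf.continuousOn_ball.norm.pow 2
  have hcircle : ContinuousOn (Real.circleAverage (fun z => ‖f z‖ ^ 2) c) (Icc 0 s) :=
    ContinuousOn.circleAverage (hcont.mono fun z hz => by simpa [dist_eq_norm] using hz.2)
      fun t ht => ht.1
  rw [integral_ball_eq_intervalIntegral_circleAverage hs hcont]
  calc π * s ^ 2 * ‖f c‖ ^ 2 = ∫ t in 0..s, 2 * π * t * ‖f c‖ ^ 2 := by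
        rw [intervalIntegral.integral_mul_const, intervalIntegral.integral_const_mul, integral_id]
        ring
    _ ≤ ∫ t in 0..s, 2 * π * t * Real.circleAverage (fun z => ‖f z‖ ^ 2) c t := by
        refine intervalIntegral.integral_mono_on hs
          ((by fun_prop : Continuous _).intervalIntegrable _ _)
          ((continuousOn_const.mul continuousOn_id).mul hcircle |>.intervalIntegrable_of_Icc hs)
          fun t ht => ?_
        have hft : DiffContOnCl ℂ f (ball c |t|) :=
          hf.mono (ball_subset_ball (by rw [abs_of_nonneg ht.1]; exact ht.2))
        exact mul_le_mul_of_nonneg_left hft.sq_norm_le_circleAverage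
          (by have := ht.1; positivity)

theorem DifferentiableOn.mul_sq_norm_le_setIntegral_sq_norm_mul {f : ℂ → ℂ} {w : ℂ → ℝ}
    {A : Set ℂ} {c : ℂ} {s m : ℝ} (hs : 0 < s) (hm : 0 ≤ m) (hf : DifferentiableOn ℂ f (ball c s))
    (hA : MeasurableSet A) (hcA : ball c s ⊆ A) (hw : ∀ z ∈ A, m ≤ w z)
    (hint : IntegrableOn (fun z => ‖f z‖ ^ 2 * w z) A) :
    π * s ^ 2 * m * ‖f c‖ ^ 2 ≤ ∫ z in A, ‖f z‖ ^ 2 * w z := by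
  -- `f` need not extend continuously to `closedBall c s`, so use smaller radii and let `t → s`.
  have hinner : ∀ t ∈ Ioo 0 s, π * t ^ 2 * m * ‖f c‖ ^ 2 ≤ ∫ z in A, ‖f z‖ ^ 2 * w z := by
    rintro t ⟨ht0, hts⟩
    have hcl : closedBall c t ⊆ ball c s := closedBall_subset_ball hts
    have hft : DiffContOnCl ℂ f (ball c t) := hf.diffContOnCl_ball hcl
    have hsq : IntegrableOn (fun z => ‖f z‖ ^ 2) (ball c t) :=
      ((hft.continuousOn_ball.norm.pow 2).integrableOn_compact (isCompact_closedBall c t)).mono_set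
        ball_subset_closedBall
    calc π * t ^ 2 * m * ‖f c‖ ^ 2 = (π * t ^ 2 * ‖f c‖ ^ 2) * m := by ring
      _ ≤ (∫ z in ball c t, ‖f z‖ ^ 2) * m := by
        gcongr
        exact hft.mul_sq_norm_le_integral_ball ht0.le
      _ = ∫ z in ball c t, ‖f z‖ ^ 2 * m := (integral_mul_const m _).symm
      _ ≤ ∫ z in ball c t, ‖f z‖ ^ 2 * w z :=
        setIntegral_mono_on (hsq.mul_const m) (hint.mono_set (ball_subset_ball hts.le |>.trans hcA))
          measurableSet_ball fun z hz =>
            mul_le_mul_of_nonneg_left (hw z (hcA (ball_subset_ball hts.le hz))) (by positivity)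
      _ ≤ ∫ z in A, ‖f z‖ ^ 2 * w z := by
        refine setIntegral_mono_set hint ?_ (ball_subset_ball hts.le |>.trans hcA).eventuallyLE
        filter_upwards [ae_restrict_mem hA] with z hz
        exact mul_nonneg (by positivity) (hm.trans (hw z hz))
  have hlim : Filter.Tendsto (fun t : ℝ => π * t ^ 2 * m * ‖f c‖ ^ 2) (nhdsWithin s (Iio s))
      (nhds (π * s ^ 2 * m * ‖f c‖ ^ 2)) :=
    ((by fun_prop : Continuous _).tendsto s).mono_left nhdsWithin_le_nhds
  exact le_of_tendsto hlim (Filter.mem_of_superset (Ioo_mem_nhdsLT hs) hinner)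

theorem measurableSet_annulus (δ : ℝ) : MeasurableSet {z : ℂ | δ < ‖z‖ ∧ ‖z‖ < 1} :=
  (measurableSet_lt measurable_const measurable_norm).inter
    (measurableSet_lt measurable_norm measurable_const)

theorem ball_subset_annulus {δ : ℝ} {z₀ : ℂ} (hz₀ : ‖z₀‖ = (1 + δ) / 2) :
    ball z₀ ((1 - δ) / 2) ⊆ {z : ℂ | δ < ‖z‖ ∧ ‖z‖ < 1} := by
  intro z hz
  rw [mem_ball_iff_norm] at hz
  have h₁ := norm_sub_norm_le z₀ z
  have h₂ := norm_sub_norm_le z z₀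
  rw [norm_sub_rev] at h₁
  exact ⟨by linarith, by linarith⟩

theorem sq_norm_le_setIntegral_annulus {f : ℂ → ℂ} {w : ℂ → ℝ} {δ m : ℝ} (hδ1 : δ < 1) (hm : 0 < m)
    (hlow : ∀ z : ℂ, δ ≤ ‖z‖ → ‖z‖ < 1 → m ≤ w z) (hf : DifferentiableOn ℂ f (ball 0 1))
    (hint : IntegrableOn (fun z => ‖f z‖ ^ 2 * w z) {z : ℂ | δ < ‖z‖ ∧ ‖z‖ < 1})
    {z : ℂ} (hz : ‖z‖ ≤ δ) :
    ‖f z‖ ^ 2 ≤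
      4 / (π * m * (1 - δ) ^ 2) * ∫ z in {z : ℂ | δ < ‖z‖ ∧ ‖z‖ < 1}, ‖f z‖ ^ 2 * w z := by
  have hr0 : 0 < (1 + δ) / 2 := by linarith [(norm_nonneg z).trans hz]
  have hr1 : closedBall (0 : ℂ) ((1 + δ) / 2) ⊆ ball 0 1 := closedBall_subset_ball (by linarith)
  obtain ⟨z₀, hz₀, hmax⟩ := exists_mem_frontier_isMaxOn_norm isBounded_ball
    (nonempty_ball.2 hr0) (hf.diffContOnCl_ball hr1)
  rw [frontier_ball 0 hr0.ne', mem_sphere_zero_iff_norm] at hz₀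
  rw [closure_ball 0 hr0.ne'] at hmax
  have hzz₀ : ‖f z‖ ≤ ‖f z₀‖ := hmax (mem_closedBall_zero_iff.2 (by linarith))
  have hz₀A := ball_subset_annulus hz₀
  have hbound := (hf.mono (hz₀A.trans fun z hz => mem_ball_zero_iff.2 hz.2)
    ).mul_sq_norm_le_setIntegral_sq_norm_mul (by linarith) hm.le (measurableSet_annulus δ) hz₀A
    (fun z hz => hlow z hz.1.le hz.2) hint
  rw [div_mul_eq_mul_div, le_div_iff₀ (by have := sub_pos.2 hδ1; positivity)]
  have hC : 0 ≤ π * m * (1 - δ) ^ 2 := by positivity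
  nlinarith [mul_le_mul_of_nonneg_left (pow_le_pow_left₀ (norm_nonneg _) hzz₀ 2) hC]

theorem disc_union_annulus {δ : ℝ} (hδ1 : δ < 1) :
    {z : ℂ | ‖z‖ ≤ δ} ∪ {z : ℂ | δ < ‖z‖ ∧ ‖z‖ < 1} = ball 0 1 := by
  ext z
  rw [mem_union, mem_ball_zero_iff]
  by_cases h : ‖z‖ ≤ δ
  · exact ⟨fun _ => h.trans_lt hδ1, fun _ => Or.inl h⟩
  · exact ⟨fun hz => hz.resolve_left h |>.2, fun hz => Or.inr ⟨lt_of_not_ge h, hz⟩⟩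

theorem setIntegral_disc_le_mul_setIntegral_annulus {f : ℂ → ℂ} {w : ℂ → ℝ} {δ m : ℝ}
    (hw0 : ∀ z, 0 ≤ w z) (hwint : IntegrableOn w {z : ℂ | ‖z‖ ≤ δ}) (hδ1 : δ < 1) (hm : 0 < m)
    (hlow : ∀ z : ℂ, δ ≤ ‖z‖ → ‖z‖ < 1 → m ≤ w z) (hf : DifferentiableOn ℂ f (ball 0 1))
    (hint : IntegrableOn (fun z => ‖f z‖ ^ 2 * w z) (ball 0 1)) :
    ∫ z in {z : ℂ | ‖z‖ ≤ δ}, ‖f z‖ ^ 2 * w z ≤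
      4 / (π * m * (1 - δ) ^ 2) * (∫ z in {z : ℂ | δ < ‖z‖ ∧ ‖z‖ < 1}, ‖f z‖ ^ 2 * w z) *
        ∫ z in {z : ℂ | ‖z‖ ≤ δ}, w z := by
  rw [← integral_const_mul]
  rw [← disc_union_annulus hδ1] at hint
  refine setIntegral_mono_on (hint.mono_set subset_union_left) (hwint.const_mul _)
    (measurableSet_le measurable_norm measurable_const)
    fun z hz => mul_le_mul_of_nonneg_right ?_ (hw0 z)
  exact sq_norm_le_setIntegral_annulus hδ1 hm hlow hf (hint.mono_set subset_union_right) hz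

theorem stmt4_general (w : ℂ → ℝ) (hw0 : ∀ z, 0 ≤ w z)
    (hwint : IntegrableOn w (ball (0:ℂ) 1))
    (δ m : ℝ) (hδ1 : δ < 1) (hm : 0 < m)
    (hlow : ∀ z : ℂ, δ ≤ ‖z‖ → ‖z‖ < 1 → m ≤ w z)
    (f : ℂ → ℂ) (hf : DifferentiableOn ℂ f (ball (0:ℂ) 1)) :
    (1 / Real.pi) * (∫ z in ball (0:ℂ) 1, ‖f z‖ ^ 2 * w z) ≤
      (1 + 4 * ((1 / Real.pi) * ∫ z in {z : ℂ | ‖z‖ ≤ δ}, w z) / (m * (1 - δ) ^ 2)) *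
        ((1 / Real.pi) *
          ∫ z in {z : ℂ | δ < ‖z‖ ∧ ‖z‖ < 1},
            ‖f z‖ ^ 2 * w z) := by
  set K := {z : ℂ | ‖z‖ ≤ δ}
  set A := {z : ℂ | δ < ‖z‖ ∧ ‖z‖ < 1}
  have hKA : K ∪ A = ball 0 1 := disc_union_annulus hδ1
  have hI : 0 ≤ ∫ z in A, ‖f z‖ ^ 2 * w z :=
    setIntegral_nonneg (measurableSet_annulus δ) fun z _ => mul_nonneg (by positivity) (hw0 z)
  have hW : 0 ≤ ∫ z in K, w z :=
    setIntegral_nonneg (measurableSet_le measurable_norm measurable_const) fun z _ => hw0 z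
  have hδ : 0 < 1 - δ := sub_pos.2 hδ1
  by_cases hint : IntegrableOn (fun z => ‖f z‖ ^ 2 * w z) (ball 0 1)
  swap
  · rw [integral_undef hint, mul_zero]
    positivity
  have hsplit : ∫ z in ball 0 1, ‖f z‖ ^ 2 * w z =
      (∫ z in K, ‖f z‖ ^ 2 * w z) + ∫ z in A, ‖f z‖ ^ 2 * w z := by
    rw [← hKA] at hint ⊢
    exact setIntegral_union (disjoint_left.2 fun z hzK hzA => (not_lt.2 hzK) hzA.1)
      (measurableSet_annulus δ) (hint.mono_set subset_union_left) (hint.mono_set subset_union_right)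
  have hdisc := setIntegral_disc_le_mul_setIntegral_annulus hw0
    (hwint.mono_set (hKA ▸ subset_union_left)) hδ1 hm hlow hf hint
  calc 1 / π * ∫ z in ball 0 1, ‖f z‖ ^ 2 * w z
      ≤ 1 / π * (4 / (π * m * (1 - δ) ^ 2) * (∫ z in A, ‖f z‖ ^ 2 * w z) * (∫ z in K, w z) +
          ∫ z in A, ‖f z‖ ^ 2 * w z) := by rw [hsplit]; gcongr
    _ = _ := by field_simp; ring

theorem stmt4 (w : ℂ → ℝ) (hw0 : ∀ z, 0 ≤ w z) (hwmeas : Measurable w)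
    (hwint : IntegrableOn w (ball (0:ℂ) 1))
    (δ m : ℝ) (hδ0 : 0 < δ) (hδ1 : δ < 1) (hm : 0 < m)
    (hlow : ∀ z : ℂ, δ ≤ ‖z‖ → ‖z‖ < 1 → m ≤ w z)
    (f : ℂ → ℂ) (hf : DifferentiableOn ℂ f (ball (0:ℂ) 1)) :
    (1 / Real.pi) * (∫ z in ball (0:ℂ) 1, ‖f z‖ ^ 2 * w z) ≤
      (1 + 4 * ((1 / Real.pi) * ∫ z in {z : ℂ | ‖z‖ ≤ δ}, w z) / (m * (1 - δ) ^ 2)) *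
        ((1 / Real.pi) *
          ∫ z in {z : ℂ | δ < ‖z‖ ∧ ‖z‖ < 1},
            ‖f z‖ ^ 2 * w z) :=
  stmt4_general w hw0 hwint δ m hδ1 hm hlow f hf
end

section
/- Let (αₙₖ)_{k>n≥0} and (αₙₙ)_{n≥0} be complex numbers and suppose there exist constants C, C' > 0 and λ ≥ 0 such that 1/|αₙₙ| ≤ C'/√n and |αₙₖ| ≤ C/k^λ for all k > n ≥ 0 (n ≥ 1 for the first bound). Define recursively h(n,0) = 1, g(n,0,k) = -αₙₖ for k > n, h(n,m+1) = g(n,m,n+m+1)/α_{n+m+1,n+m+1}, and g(n,m+1,k) = g(n,m,k) - h(n,m+1)α_{n+m+1,k} for k ≥ n+m+2. Then for all m ≥ 0 and k ≥ n+m+1, |g(n,m,k)| ≤ (C/k^λ) ∏_{ℓ=1}^{m} (1 + CC'/(n+ℓ)^{λ+1/2}), and for all j ≥ 1, |h(n,j)| ≤ (CC'/(n+j)^{λ+1/2}) ∏_{ℓ=1}^{j-1} (1 + CC'/(n+ℓ)^{λ+1/2}). -/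
/-!
Fix `n`. By induction on `m`, `‖g n m k‖ ≤ A k · Pₘ` where `A k = C / k^λ` bounds the off-diagonal
entries and `Pₘ = ∏_{ℓ ≤ m} (1 + A (n+ℓ) D (n+ℓ))` with `D j = C' / √j` bounding `1 / ‖α j j‖`.
Dividing the bound on `g n m (n+m+1)` by the diagonal entry gives `‖h n (m+1)‖ ≤ A D · Pₘ` at
`n+m+1`, and the triangle inequality in the recursion for `g` then multiplies the bound by
`1 + A D`. Finally `(C / j^λ) (C' / √j) = C C' / j^(λ+1/2)`.
-/

section

variable {𝕜 : Type*} [NormedDivisionRing 𝕜] {α : ℕ → ℕ → 𝕜} {h : ℕ → 𝕜} {g : ℕ → ℕ → 𝕜}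
  {A D : ℕ → ℝ} {n : ℕ}

theorem norm_succ_le_of_norm_le_of_diag {m : ℕ} {P : ℝ}
    (hdiag : ‖α (n + m + 1) (n + m + 1)‖⁻¹ ≤ D (n + m + 1))
    (hhrec : h (m + 1) = g m (n + m + 1) / α (n + m + 1) (n + m + 1))
    (hg : ‖g m (n + m + 1)‖ ≤ A (n + m + 1) * P) :
    ‖h (m + 1)‖ ≤ A (n + m + 1) * D (n + m + 1) * P := by
  calc ‖h (m + 1)‖ = ‖g m (n + m + 1)‖ * ‖α (n + m + 1) (n + m + 1)‖⁻¹ := by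
        rw [hhrec, norm_div, div_eq_mul_inv]
    _ ≤ A (n + m + 1) * P * D (n + m + 1) :=
        mul_le_mul hg hdiag (inv_nonneg.2 (norm_nonneg _)) ((norm_nonneg _).trans hg)
    _ = A (n + m + 1) * D (n + m + 1) * P := by ring

variable (hdiag : ∀ j, n < j → ‖α j j‖⁻¹ ≤ D j)
  (hoff : ∀ j k, n ≤ j → j < k → ‖α j k‖ ≤ A k)
  (hg0 : ∀ k, n < k → g 0 k = -α n k)
  (hhrec : ∀ m, h (m + 1) = g m (n + m + 1) / α (n + m + 1) (n + m + 1))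
  (hgrec : ∀ m k, n + m + 2 ≤ k → g (m + 1) k = g m k - h (m + 1) * α (n + m + 1) k)
include hdiag hoff hg0 hhrec hgrec

theorem norm_le_mul_prod_of_recursion (m k : ℕ) (hk : n + m + 1 ≤ k) :
    ‖g m k‖ ≤ A k * ∏ ℓ ∈ Finset.Icc 1 m, (1 + A (n + ℓ) * D (n + ℓ)) := by
  induction m generalizing k with
  | zero => simpa [hg0 k (by omega)] using hoff n k le_rfl (by omega)
  | succ m ih =>
    set P := ∏ ℓ ∈ Finset.Icc 1 m, (1 + A (n + ℓ) * D (n + ℓ))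
    have hh : ‖h (m + 1)‖ ≤ A (n + m + 1) * D (n + m + 1) * P :=
      norm_succ_le_of_norm_le_of_diag (hdiag _ (by omega)) (hhrec m) (ih _ le_rfl)
    have hα : ‖α (n + m + 1) k‖ ≤ A k := hoff _ _ (by omega) (by omega)
    calc ‖g (m + 1) k‖ ≤ ‖g m k‖ + ‖h (m + 1)‖ * ‖α (n + m + 1) k‖ := by
          rw [hgrec m k (by omega), ← norm_mul]
          exact norm_sub_le _ _
      _ ≤ A k * P + A (n + m + 1) * D (n + m + 1) * P * A k :=
          add_le_add (ih k (by omega))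
            (mul_le_mul hh hα (norm_nonneg _) ((norm_nonneg _).trans hh))
      _ = A k * ∏ ℓ ∈ Finset.Icc 1 (m + 1), (1 + A (n + ℓ) * D (n + ℓ)) := by
          rw [Finset.prod_Icc_succ_top (by omega), ← add_assoc]
          ring

theorem norm_succ_le_mul_prod_of_recursion (m : ℕ) :
    ‖h (m + 1)‖ ≤ A (n + m + 1) * D (n + m + 1) *
      ∏ ℓ ∈ Finset.Icc 1 m, (1 + A (n + ℓ) * D (n + ℓ)) :=
  norm_succ_le_of_norm_le_of_diag (hdiag _ (by omega)) (hhrec m)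
    (norm_le_mul_prod_of_recursion hdiag hoff hg0 hhrec hgrec m _ le_rfl)

end

theorem div_rpow_mul_div_sqrt {x : ℝ} (hx : 0 < x) (C C' lam : ℝ) :
    C / x ^ lam * (C' / Real.sqrt x) = C * C' / x ^ (lam + 1 / 2) := by
  rw [Real.sqrt_eq_rpow, Real.rpow_add hx]
  ring

theorem stmt13_general (α : ℕ → ℕ → ℂ) (C C' lam : ℝ)
    (hαnn : ∀ n : ℕ, 1 ≤ n → 1 / ‖α n n‖ ≤ C' / Real.sqrt n)
    (hαnk : ∀ n k : ℕ, n < k → ‖α n k‖ ≤ C / (k : ℝ) ^ lam)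
    (h : ℕ → ℕ → ℂ) (g : ℕ → ℕ → ℕ → ℂ)
    (hg0 : ∀ n k, n < k → g n 0 k = -α n k)
    (hhrec : ∀ n m, h n (m + 1) = g n m (n + m + 1) / α (n + m + 1) (n + m + 1))
    (hgrec : ∀ n m k, n + m + 2 ≤ k →
      g n (m + 1) k = g n m k - h n (m + 1) * α (n + m + 1) k) :
    (∀ n m k : ℕ, n + m + 1 ≤ k →
      ‖g n m k‖ ≤ (C / (k : ℝ) ^ lam) *
        ∏ ℓ ∈ Finset.Icc 1 m, (1 + C * C' / ((n : ℝ) + ℓ) ^ (lam + 1 / 2))) ∧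
    (∀ n j : ℕ, 1 ≤ j →
      ‖h n j‖ ≤ (C * C' / ((n : ℝ) + j) ^ (lam + 1 / 2)) *
        ∏ ℓ ∈ Finset.Icc 1 (j - 1), (1 + C * C' / ((n : ℝ) + ℓ) ^ (lam + 1 / 2))) := by
  set A : ℕ → ℝ := fun k => C / (k : ℝ) ^ lam
  set D : ℕ → ℝ := fun j => C' / Real.sqrt j
  have hweight : ∀ n ℓ : ℕ, 1 ≤ n + ℓ →
      A (n + ℓ) * D (n + ℓ) = C * C' / ((n : ℝ) + ℓ) ^ (lam + 1 / 2) := by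
    intro n ℓ hnℓ
    rw [div_rpow_mul_div_sqrt (Nat.cast_pos.2 hnℓ), Nat.cast_add]
  have hprod : ∀ n m : ℕ, ∏ ℓ ∈ Finset.Icc 1 m, (1 + A (n + ℓ) * D (n + ℓ)) =
      ∏ ℓ ∈ Finset.Icc 1 m, (1 + C * C' / ((n : ℝ) + ℓ) ^ (lam + 1 / 2)) :=
    fun n m => Finset.prod_congr rfl fun ℓ hℓ => by
      rw [hweight n ℓ (by simp at hℓ; omega)]
  have hdiag : ∀ n j, n < j → ‖α j j‖⁻¹ ≤ D j := fun n j hj => by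
    simpa using hαnn j (by omega)
  have hoff : ∀ n j k, n ≤ j → j < k → ‖α j k‖ ≤ A k := fun _ j k _ hjk => hαnk j k hjk
  refine ⟨fun n m k hk => ?_, fun n j hj => ?_⟩
  · rw [← hprod]
    exact norm_le_mul_prod_of_recursion (hdiag n) (hoff n) (hg0 n) (hhrec n) (hgrec n) m k hk
  · obtain ⟨m, rfl⟩ : ∃ m, j = m + 1 := ⟨j - 1, by omega⟩
    have hbound := norm_succ_le_mul_prod_of_recursion (hdiag n) (hoff n) (hg0 n) (hhrec n) (hgrec n) m
    rw [hprod] at hbound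
    rw [Nat.add_sub_cancel, ← hweight n (m + 1) (by omega)]
    exact hbound

theorem stmt13 (α : ℕ → ℕ → ℂ) (C C' lam : ℝ) (hC : 0 < C) (hC' : 0 < C') (hlam : 0 ≤ lam)
    (hαnn : ∀ n : ℕ, 1 ≤ n → 1 / ‖α n n‖ ≤ C' / Real.sqrt n)
    (hαnk : ∀ n k : ℕ, n < k → ‖α n k‖ ≤ C / (k : ℝ) ^ lam)
    (h : ℕ → ℕ → ℂ) (g : ℕ → ℕ → ℕ → ℂ)
    (hh0 : ∀ n, h n 0 = 1)
    (hg0 : ∀ n k, n < k → g n 0 k = -α n k)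
    (hhrec : ∀ n m, h n (m + 1) = g n m (n + m + 1) / α (n + m + 1) (n + m + 1))
    (hgrec : ∀ n m k, n + m + 2 ≤ k →
      g n (m + 1) k = g n m k - h n (m + 1) * α (n + m + 1) k) :
    (∀ n m k : ℕ, n + m + 1 ≤ k →
      ‖g n m k‖ ≤ (C / (k : ℝ) ^ lam) *
        ∏ ℓ ∈ Finset.Icc 1 m, (1 + C * C' / ((n : ℝ) + ℓ) ^ (lam + 1 / 2))) ∧
    (∀ n j : ℕ, 1 ≤ j →
      ‖h n j‖ ≤ (C * C' / ((n : ℝ) + j) ^ (lam + 1 / 2)) *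
        ∏ ℓ ∈ Finset.Icc 1 (j - 1), (1 + C * C' / ((n : ℝ) + ℓ) ^ (lam + 1 / 2))) :=
  stmt13_general α C C' lam hαnn hαnk h g hg0 hhrec hgrec
end

section
/- Let h(n,j) be complex numbers with h(n,0) = 1 and |h(n,j)| ≤ (CC'/(n+j)^{λ+1/2}) ∏_{ℓ=1}^{j-1}(1 + CC'/(n+ℓ)^{λ+1/2}) for j ≥ 1, where C, C' > 0, λ ≥ 0. Define Hₙ(z) = Σ_{j=1}^∞ h(n,j) zʲ. Then Hₙ is well-defined and holomorphic on the open unit disk, Hₙ(0) = 0, and for every 0 < r < 1 there is a constant K (depending on r, C, C', λ) such that |Hₙ(z)| ≤ K n^{-λ-1/2} for all |z| ≤ r and all n ≥ 1. -/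
/-!
For `n ≥ 1` every coefficient `h n (j + 1)` is bounded by `C C' n^(-λ-1/2) P j`, where
`P j = ∏_{ℓ<j} (1 + C C' / (ℓ + 2)^(λ+1/2))` no longer depends on `n`. The factors of `P` tend
to `1`, so by the ratio test `∑ P j r^j` converges for every `r < 1`. This single majorant gives
convergence on the unit disk, holomorphy (via locally uniform convergence) and the bound
`|Hₙ(z)| ≤ K n^(-λ-1/2)` on `|z| ≤ r` simultaneously.
-/

open Metric Filter Topology Finset

theorem prod_Icc_one_eq_prod_range {M : Type*} [CommMonoid M] (f : ℕ → M) (j : ℕ) :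
    ∏ ℓ ∈ Icc 1 j, f ℓ = ∏ ℓ ∈ range j, f (ℓ + 1) := by
  rw [← Ico_add_one_right_eq_Icc, prod_Ico_eq_prod_range]
  simp [add_comm]

theorem summable_prod_one_add_mul_pow {c : ℕ → ℝ} (hc : Tendsto c atTop (𝓝 0)) {r : ℝ}
    (hr : ‖r‖ < 1) : Summable fun j => (∏ ℓ ∈ range j, (1 + c ℓ)) * r ^ j := by
  obtain ⟨q, hrq, hq1⟩ := exists_between hr
  have hratio : Tendsto (fun j => ‖(1 + c j) * r‖) atTop (𝓝 ‖r‖) := by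
    simpa using ((hc.const_add 1).mul_const r).norm
  refine summable_of_ratio_norm_eventually_le hq1 ?_
  filter_upwards [hratio.eventually_le_const hrq] with j hj
  rw [prod_range_succ, pow_succ, mul_mul_mul_comm, norm_mul, mul_comm q]
  exact mul_le_mul_of_nonneg_left hj (norm_nonneg _)

section PowerSeriesMajorant

variable {a : ℕ → ℂ} {M : ℕ → ℝ}

theorem norm_mul_pow_le_of_majorant (ha : ∀ j, ‖a j‖ ≤ M j) {z : ℂ} {r : ℝ} (hz : ‖z‖ ≤ r)
    (j : ℕ) : ‖a j * z ^ j‖ ≤ M j * r ^ j := by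
  rw [norm_mul, norm_pow]
  exact mul_le_mul (ha j) (pow_le_pow_left₀ (norm_nonneg z) hz j) (by positivity)
    ((norm_nonneg _).trans (ha j))

theorem summable_mul_pow_of_majorant (ha : ∀ j, ‖a j‖ ≤ M j) {z : ℂ} {r : ℝ} (hz : ‖z‖ ≤ r)
    (hM : Summable fun j => M j * r ^ j) : Summable fun j => a j * z ^ j :=
  Summable.of_norm_bounded hM (norm_mul_pow_le_of_majorant ha hz)

theorem norm_tsum_mul_pow_le_of_majorant (ha : ∀ j, ‖a j‖ ≤ M j) {z : ℂ} {r : ℝ} (hz : ‖z‖ ≤ r)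
    (hM : Summable fun j => M j * r ^ j) : ‖∑' j, a j * z ^ j‖ ≤ ∑' j, M j * r ^ j :=
  tsum_of_norm_bounded hM.hasSum (norm_mul_pow_le_of_majorant ha hz)

theorem differentiableOn_tsum_mul_pow_of_majorant (ha : ∀ j, ‖a j‖ ≤ M j)
    (hM : ∀ r : ℝ, 0 ≤ r → r < 1 → Summable fun j => M j * r ^ j) :
    DifferentiableOn ℂ (fun z => ∑' j, a j * z ^ j) (ball 0 1) := by
  intro z hz
  rw [mem_ball_zero_iff] at hz
  obtain ⟨s, hzs, hs1⟩ := exists_between hz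
  have hdiff : DifferentiableOn ℂ (fun w => ∑' j, a j * w ^ j) (ball 0 s) :=
    Complex.differentiableOn_tsum_of_summable_norm (hM s ((norm_nonneg z).trans hzs.le) hs1)
      (fun j => (differentiable_const _ |>.mul (differentiable_pow j)).differentiableOn)
      isOpen_ball
      (fun j w hw => norm_mul_pow_le_of_majorant ha (mem_ball_zero_iff.mp hw).le j)
  exact (hdiff.differentiableAt (isOpen_ball.mem_nhds (mem_ball_zero_iff.mpr hzs)))
    |>.differentiableWithinAt

end PowerSeriesMajorant

theorem tendsto_div_natCast_add_rpow_atTop (D : ℝ) {a : ℝ} (ha : 0 < a) (b : ℝ) :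
    Tendsto (fun ℓ : ℕ => D / ((ℓ : ℝ) + b) ^ a) atTop (𝓝 0) :=
  tendsto_const_nhds.div_atTop <| (tendsto_rpow_atTop ha).comp <|
    tendsto_atTop_add_const_right atTop b tendsto_natCast_atTop_atTop

theorem div_add_rpow_le_mul_rpow_neg {D a x t : ℝ} (hD : 0 ≤ D) (ha : 0 ≤ a) (hx : 0 < x)
    (ht : 0 ≤ t) : D / (x + t) ^ a ≤ D * x ^ (-a) := by
  rw [Real.rpow_neg hx.le, ← div_eq_mul_inv]
  gcongr
  linarith

theorem prod_Icc_one_add_div_rpow_le {D a : ℝ} (hD : 0 ≤ D) (ha : 0 ≤ a) {n : ℕ} (hn : 1 ≤ n)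
    (j : ℕ) : ∏ ℓ ∈ Icc 1 j, (1 + D / ((n : ℝ) + ℓ) ^ a) ≤
      ∏ ℓ ∈ range j, (1 + D / ((ℓ : ℝ) + 2) ^ a) := by
  rw [prod_Icc_one_eq_prod_range]
  refine prod_le_prod (fun ℓ _ => by positivity) fun ℓ _ => ?_
  have hn' : (1 : ℝ) ≤ n := by exact_mod_cast hn
  gcongr 1 + D / ?_ ^ a
  push_cast
  linarith

theorem stmt15_general (C C' lam : ℝ) (hC : 0 < C) (hC' : 0 < C') (hlam : 0 ≤ lam)
    (h : ℕ → ℕ → ℂ)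
    (hhb : ∀ n j : ℕ, 1 ≤ j →
      ‖h n j‖ ≤ (C * C' / ((n : ℝ) + j) ^ (lam + 1 / 2)) *
        ∏ ℓ ∈ Finset.Icc 1 (j - 1), (1 + C * C' / ((n : ℝ) + ℓ) ^ (lam + 1 / 2)))
    (H : ℕ → ℂ → ℂ)
    (hH : ∀ (n : ℕ) (z : ℂ), H n z = ∑' j : ℕ, h n (j + 1) * z ^ (j + 1)) :
    (∀ n : ℕ, 1 ≤ n → ∀ z ∈ ball (0:ℂ) 1,
        Summable (fun j : ℕ => h n (j + 1) * z ^ (j + 1))) ∧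
    (∀ n : ℕ, 1 ≤ n → DifferentiableOn ℂ (H n) (ball (0:ℂ) 1)) ∧
    (∀ n : ℕ, H n 0 = 0) ∧
    (∀ r : ℝ, 0 < r → r < 1 → ∃ K : ℝ, ∀ n : ℕ, 1 ≤ n → ∀ z : ℂ, ‖z‖ ≤ r →
      ‖H n z‖ ≤ K * (n : ℝ) ^ (-(lam + 1 / 2))) := by
  set D := C * C'
  set a := lam + 1 / 2
  have hD : 0 ≤ D := by positivity
  have ha : 0 < a := by positivity
  set P : ℕ → ℝ := fun j => ∏ ℓ ∈ range j, (1 + D / ((ℓ : ℝ) + 2) ^ a)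
  have hP : ∀ r : ℝ, 0 ≤ r → r < 1 → Summable fun j => P j * r ^ j := fun r hr0 hr1 =>
    summable_prod_one_add_mul_pow (tendsto_div_natCast_add_rpow_atTop D ha 2)
      (by rwa [Real.norm_of_nonneg hr0])
  have hbound : ∀ n, 1 ≤ n → ∀ j, ‖h n (j + 1)‖ ≤ D * (n : ℝ) ^ (-a) * P j := by
    intro n hn j
    have hn' : (0 : ℝ) < n := by exact_mod_cast hn
    refine (hhb n (j + 1) (by omega)).trans (mul_le_mul ?_ ?_ (by positivity) (by positivity))
    · exact div_add_rpow_le_mul_rpow_neg hD ha.le hn' (by positivity)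
    · exact prod_Icc_one_add_div_rpow_le hD ha.le hn j
  have hmaj : ∀ (n : ℕ) (r : ℝ), 0 ≤ r → r < 1 →
      Summable fun j => D * (n : ℝ) ^ (-a) * P j * r ^ j := fun n r hr0 hr1 => by
    simpa only [mul_assoc] using (hP r hr0 hr1).mul_left (D * (n : ℝ) ^ (-a))
  have hHz : ∀ n, H n = fun z => z * ∑' j, h n (j + 1) * z ^ j := by
    intro n; funext z
    rw [hH, ← tsum_mul_left]
    exact tsum_congr fun j => by ring
  refine ⟨fun n hn z hz => ?_, fun n hn => ?_, fun n => by simp [hHz], fun r hr0 hr1 => ?_⟩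
  · have hz1 := mem_ball_zero_iff.mp hz
    exact ((summable_mul_pow_of_majorant (hbound n hn) le_rfl
      (hmaj n ‖z‖ (norm_nonneg z) hz1)).mul_left z).congr fun j => by ring
  · rw [hHz]
    exact differentiableOn_id.mul
      (differentiableOn_tsum_mul_pow_of_majorant (hbound n hn) (hmaj n))
  · refine ⟨D * r * ∑' j, P j * r ^ j, fun n hn z hz => ?_⟩
    have hsum := norm_tsum_mul_pow_le_of_majorant (hbound n hn) hz (hmaj n r hr0.le hr1)
    rw [hHz, norm_mul]
    calc ‖z‖ * ‖∑' j, h n (j + 1) * z ^ j‖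
        ≤ r * ∑' j, D * (n : ℝ) ^ (-a) * P j * r ^ j := by gcongr
      _ = D * r * (∑' j, P j * r ^ j) * (n : ℝ) ^ (-a) := by
        simp only [mul_assoc, tsum_mul_left]; ring

theorem stmt15 (C C' lam : ℝ) (hC : 0 < C) (hC' : 0 < C') (hlam : 0 ≤ lam)
    (h : ℕ → ℕ → ℂ) (hh0 : ∀ n, h n 0 = 1)
    (hhb : ∀ n j : ℕ, 1 ≤ j →
      ‖h n j‖ ≤ (C * C' / ((n : ℝ) + j) ^ (lam + 1 / 2)) *
        ∏ ℓ ∈ Finset.Icc 1 (j - 1), (1 + C * C' / ((n : ℝ) + ℓ) ^ (lam + 1 / 2)))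
    (H : ℕ → ℂ → ℂ)
    (hH : ∀ (n : ℕ) (z : ℂ), H n z = ∑' j : ℕ, h n (j + 1) * z ^ (j + 1)) :
    (∀ n : ℕ, 1 ≤ n → ∀ z ∈ ball (0:ℂ) 1,
        Summable (fun j : ℕ => h n (j + 1) * z ^ (j + 1))) ∧
    (∀ n : ℕ, 1 ≤ n → DifferentiableOn ℂ (H n) (ball (0:ℂ) 1)) ∧
    (∀ n : ℕ, H n 0 = 0) ∧
    (∀ r : ℝ, 0 < r → r < 1 → ∃ K : ℝ, ∀ n : ℕ, 1 ≤ n → ∀ z : ℂ, ‖z‖ ≤ r →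
      ‖H n z‖ ≤ K * (n : ℝ) ^ (-(lam + 1 / 2))) :=
  stmt15_general C C' lam hC hC' hlam h hhb H hH
end
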